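/- arXiv:2401.07891 — 2 statements merged into one kernel-verified Lean document; each statement's English description precedes it below -/
import Mathlib

section
/- For nonnegative integers a, b with n = a + b + 1, the inequality |C(a,b) − c(a/n)| ≤ 1/n holds, where C(a,b) = ((a+1)(2a+1)(a+3b+3))/((a+b+1)(a+b+2)(2(a+b)+3)) and c(x) = x²(3−2x). -/
/-- The leaf-growth split probability `C(a,b)` as a real number. -/
noncomputable def lgC (a b : ℕ) : ℝ :=
  ((a + 1) * (2 * a + 1) * (a + 3 * b + 3)) /
    ((a + b + 1) * (a + b + 2) * (2 * (a + b) + 3))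

/-- The limiting split function `c(x) = x²(3-2x)`. -/
def cfun (x : ℝ) : ℝ := x ^ 2 * (3 - 2 * x)

lemma lgC_approx_aux (A B : ℝ) (hA : 0 ≤ A) (hB : 0 ≤ B) :
    |((A + 1) * (2 * A + 1) * (A + 3 * B + 3)) /
      ((A + B + 1) * (A + B + 2) * (2 * (A + B) + 3)) -
      (A / (A + B + 1)) ^ 2 * (3 - 2 * (A / (A + B + 1)))| ≤ 1 / (A + B + 1) := by
  have h1 : (0:ℝ) < A + B + 1 := by linarith
  have h2 : (0:ℝ) < A + B + 2 := by linarith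
  have h3 : (0:ℝ) < 2 * (A + B) + 3 := by linarith
  have key : ((A + 1) * (2 * A + 1) * (A + 3 * B + 3)) /
      ((A + B + 1) * (A + B + 2) * (2 * (A + B) + 3)) -
      (A / (A + B + 1)) ^ 2 * (3 - 2 * (A / (A + B + 1)))
      = (3*A^3*B + 3*A^3 + 12*A^2*B^2 + 26*A^2*B + 14*A^2 + 9*A*B^3 + 34*A*B^2
          + 41*A*B + 16*A + 3*B^3 + 9*B^2 + 9*B + 3) /
        ((A + B + 1)^3 * (A + B + 2) * (2 * (A + B) + 3)) := by
    field_simp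
    ring
  rw [key]
  have hAB := mul_nonneg hA hB
  have hA2 := mul_nonneg hA hA
  have hB2 := mul_nonneg hB hB
  have hnum : (0:ℝ) ≤ 3*A^3*B + 3*A^3 + 12*A^2*B^2 + 26*A^2*B + 14*A^2 + 9*A*B^3 + 34*A*B^2
      + 41*A*B + 16*A + 3*B^3 + 9*B^2 + 9*B + 3 := by
    nlinarith [mul_nonneg hA2 hAB, mul_nonneg hA2 hA, mul_nonneg hA2 hB,
      mul_nonneg hAB hAB, mul_nonneg hAB hB, mul_nonneg hB2 hB, mul_nonneg hB2 hAB]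
  have hden : (0:ℝ) < (A + B + 1)^3 * (A + B + 2) * (2 * (A + B) + 3) := by positivity
  rw [abs_of_nonneg (div_nonneg hnum hden.le), div_le_div_iff₀ hden h1]
  nlinarith [mul_nonneg hA2 hA2, mul_nonneg hA2 hAB, mul_nonneg (mul_nonneg hA2 hA) hB,
    mul_nonneg hB2 hB2, mul_nonneg hAB hB2, mul_nonneg hB2 hB, mul_nonneg hA2 hB2,
    mul_nonneg hA2 hA, mul_nonneg hA2 hB, mul_nonneg hAB hB, mul_nonneg hA hB2,
    sq_nonneg (A - B), sq_nonneg (A*B - B^2), sq_nonneg (A^2 - A*B)]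

theorem lgC_approx (a b n : ℕ) (hn : n = a + b + 1) :
    |lgC a b - cfun ((a : ℝ) / n)| ≤ 1 / n := by
  subst hn
  have h := lgC_approx_aux (a : ℝ) (b : ℝ) a.cast_nonneg b.cast_nonneg
  unfold lgC cfun
  push_cast
  convert h using 3 <;> ring
end

section
/- There exists a constant K' > 0 such that for all positive integers a, b with n = a + b + 1, n^{3/2}·P(a,b) ≤ K'·(a/n)^{−3/2}·(b/n)^{−3/2}, where P(a,b) = Cat(a)·Cat(b)/Cat(a+b+1) and Cat is the Catalan number sequence. -/
/-!
From `(n + 1) Cat(n) = C(2n, n)` and the recursion `(n + 1) C(2n+2, n+1) = 2 (2n + 1) C(2n, n)`, an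
induction gives `C(2n, n)² (n + 1) ≤ 16ⁿ ≤ 4 n C(2n, n)²`, i.e. `Cat(m) ≈ 4ᵐ m^{-3/2}` up to constant
factors on both sides. Hence `(Cat(a) Cat(b))² (ab)³ ≤ 16^{a+b} = 16ⁿ / 16 ≤ n³ Cat(n)²`, which after
taking square roots is the claimed bound with `K' = 1`. Squaring is what keeps the whole argument in `ℕ`.
-/

/-- The profile probability `P(a,b) = Cat(a)Cat(b)/Cat(a+b+1)` as a real number. -/
noncomputable def lgP (a b : ℕ) : ℝ := (catalan a * catalan b : ℝ) / catalan (a + b + 1)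

namespace Nat

theorem centralBinom_sq_mul_succ_le_sixteen_pow (n : ℕ) :
    n.centralBinom ^ 2 * (n + 1) ≤ 16 ^ n := by
  induction n with
  | zero => simp
  | succ n ih =>
    have hcubic : (2 * n + 1) ^ 2 * (n + 2) ≤ 4 * (n + 1) ^ 3 := by ring_nf; omega
    refine le_of_mul_le_mul_left ?_ (by positivity : 0 < (n + 1) ^ 2)
    calc (n + 1) ^ 2 * ((n + 1).centralBinom ^ 2 * (n + 1 + 1))
        = 4 * ((2 * n + 1) ^ 2 * (n + 2)) * n.centralBinom ^ 2 := by
          rw [← mul_assoc, ← mul_pow, succ_mul_centralBinom_succ]; ring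
      _ ≤ 4 * (4 * (n + 1) ^ 3) * n.centralBinom ^ 2 := by gcongr
      _ = (n + 1) ^ 2 * 16 * (n.centralBinom ^ 2 * (n + 1)) := by ring
      _ ≤ (n + 1) ^ 2 * 16 * 16 ^ n := by gcongr
      _ = (n + 1) ^ 2 * 16 ^ (n + 1) := by ring

theorem sixteen_pow_le_four_mul_centralBinom_sq {n : ℕ} (hn : 1 ≤ n) :
    16 ^ n ≤ 4 * n * n.centralBinom ^ 2 := by
  induction n, hn using le_induction with
  | base => decide
  | succ n _ ih =>
    have hquad : 4 * n * (n + 1) ≤ (2 * n + 1) ^ 2 := by ring_nf; omega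
    refine le_of_mul_le_mul_left ?_ (by positivity : 0 < (n + 1) ^ 2)
    calc (n + 1) ^ 2 * 16 ^ (n + 1) = 16 * (n + 1) ^ 2 * 16 ^ n := by ring
      _ ≤ 16 * (n + 1) ^ 2 * (4 * n * n.centralBinom ^ 2) := by gcongr
      _ = 16 * (n + 1) * (4 * n * (n + 1)) * n.centralBinom ^ 2 := by ring
      _ ≤ 16 * (n + 1) * (2 * n + 1) ^ 2 * n.centralBinom ^ 2 := by gcongr
      _ = 4 * (n + 1) * (2 * (2 * n + 1) * n.centralBinom) ^ 2 := by ring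
      _ = (n + 1) ^ 2 * (4 * (n + 1) * (n + 1).centralBinom ^ 2) := by
          rw [← succ_mul_centralBinom_succ]; ring

end Nat

theorem catalan_pos (n : ℕ) : 0 < catalan n :=
  Nat.pos_of_mul_pos_left (succ_mul_catalan_eq_centralBinom n ▸ n.centralBinom_pos)

theorem catalan_sq_mul_cube_le_sixteen_pow (m : ℕ) : catalan m ^ 2 * m ^ 3 ≤ 16 ^ m :=
  calc catalan m ^ 2 * m ^ 3 ≤ catalan m ^ 2 * (m + 1) ^ 3 := by gcongr; omega
    _ = m.centralBinom ^ 2 * (m + 1) := by rw [← succ_mul_catalan_eq_centralBinom]; ring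
    _ ≤ 16 ^ m := Nat.centralBinom_sq_mul_succ_le_sixteen_pow m

theorem sixteen_pow_le_sixteen_mul_cube_mul_catalan_sq {n : ℕ} (hn : 1 ≤ n) :
    16 ^ n ≤ 16 * n ^ 3 * catalan n ^ 2 :=
  calc 16 ^ n ≤ 4 * n * n.centralBinom ^ 2 := Nat.sixteen_pow_le_four_mul_centralBinom_sq hn
    _ = 4 * n * (n + 1) ^ 2 * catalan n ^ 2 := by rw [← succ_mul_catalan_eq_centralBinom]; ring
    _ ≤ 4 * n * (2 * n) ^ 2 * catalan n ^ 2 := by gcongr; omega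
    _ = 16 * n ^ 3 * catalan n ^ 2 := by ring

theorem catalan_mul_catalan_sq_mul_cube_le (a b : ℕ) :
    (catalan a * catalan b) ^ 2 * (a * b) ^ 3 ≤ (a + b + 1) ^ 3 * catalan (a + b + 1) ^ 2 := by
  refine le_of_mul_le_mul_left ?_ (by norm_num : 0 < 16)
  calc 16 * ((catalan a * catalan b) ^ 2 * (a * b) ^ 3)
      = 16 * ((catalan a ^ 2 * a ^ 3) * (catalan b ^ 2 * b ^ 3)) := by ring
    _ ≤ 16 * (16 ^ a * 16 ^ b) := by
        gcongr <;> exact catalan_sq_mul_cube_le_sixteen_pow _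
    _ = 16 ^ (a + b + 1) := by ring
    _ ≤ 16 * ((a + b + 1) ^ 3 * catalan (a + b + 1) ^ 2) := by
        rw [← mul_assoc]; exact sixteen_pow_le_sixteen_mul_cube_mul_catalan_sq (by omega)

theorem lgP_sq_mul_cube_le (a b : ℕ) : lgP a b ^ 2 * ((a : ℝ) * b) ^ 3 ≤ ((a + b + 1 : ℕ) : ℝ) ^ 3 := by
  have hpos : (0 : ℝ) < catalan (a + b + 1) ^ 2 := by
    have := catalan_pos (a + b + 1); positivity
  rw [lgP, div_pow, div_mul_eq_mul_div, div_le_iff₀ hpos]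
  exact_mod_cast catalan_mul_catalan_sq_mul_cube_le a b

theorem Real.rpow_div_two_sq {x : ℝ} (hx : 0 ≤ x) (r : ℝ) : (x ^ (r / 2)) ^ 2 = x ^ r := by
  rw [← Real.rpow_mul_natCast hx]; norm_num

theorem lgP_upper_bound :
    ∃ K' : ℝ, 0 < K' ∧ ∀ a b : ℕ, 0 < a → 0 < b →
      ∀ n : ℕ, n = a + b + 1 →
        (n : ℝ) ^ ((3 : ℝ) / 2) * lgP a b ≤
          K' * ((a : ℝ) / n) ^ (-(3 / 2) : ℝ) * ((b : ℝ) / n) ^ (-(3 / 2) : ℝ) := by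
  refine ⟨1, one_pos, fun a b ha hb n hn => ?_⟩
  subst hn
  have hN : (0 : ℝ) < (a + b + 1 : ℕ) := by positivity
  have hP : 0 ≤ lgP a b := by unfold lgP; positivity
  rw [← pow_le_pow_iff_left₀ (by positivity) (by positivity) two_ne_zero, ← neg_div, mul_pow, mul_pow,
    mul_pow, Real.rpow_div_two_sq hN.le, Real.rpow_div_two_sq (by positivity),
    Real.rpow_div_two_sq (by positivity)]
  simp only [Real.rpow_ofNat, one_pow, Real.rpow_neg_ofNat, Int.reduceNeg, zpow_neg, zpow_ofNat,
    div_pow, inv_div, one_mul]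
  have key := lgP_sq_mul_cube_le a b
  rw [div_mul_div_comm, le_div_iff₀ (by positivity)]
  calc _ = ((a + b + 1 : ℕ) : ℝ) ^ 3 * (lgP a b ^ 2 * ((a : ℝ) * b) ^ 3) := by ring
    _ ≤ _ := by gcongr
end
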